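/- Consider the Arnold circle map with lift F(x,α,β) = x + α + β sin(2πx), and a C¹ path μ ↦ (α(μ), β(μ)) with (α(0), β(0)) = (0, 0). If |α'(0)| > |β'(0)|, then the rotation number ρ(μ) of F(·, α(μ), β(μ)) is differentiable at μ = 0 and ρ'(0) = sign(α'(0))·√(α'(0)² − β'(0)²). -/

import Mathlib

/-!
For `|b| < |a|` the lift `F x = x + a + b sin 2πx` is one Euler step of the flow of
`ẋ = g x = a + b sin 2πx`, whose rotation number is `c = a √(1 - (b/a)²)`: its period is
`∫₀¹ dx / g = 1 / c`. The explicit coordinate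
`H x = x + π⁻¹ arctan (b cos 2πx / (a + c + b sin 2πx))` has `H' = c / g` and `|H - id| ≤ 1/2`,
so by the mean value theorem `|H (F x) - H x - c| = O(|a| |b|)`, and the rotation number of `F`
lies within `O(|a| |b|)` of `c`. Along the path, `c (α μ) (β μ) = μ c (α μ / μ) (β μ / μ)` while
the error is `O(μ²)`, hence `ρ μ / μ → c (α' 0) (β' 0) = sign (α' 0) √(α' 0² - β' 0²)`.
-/

open Filter Real

/-- `r` is the rotation number of the lift `F`, i.e. `(Fⁿ(0) - 0)/n → r`. -/
def HasRotNum (F : ℝ → ℝ) (r : ℝ) : Prop :=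
  Filter.Tendsto (fun n : ℕ => F^[n] 0 / n) Filter.atTop (nhds r)

open Topology

noncomputable def arnoldLift (a b x : ℝ) : ℝ := x + a + b * sin (2 * π * x)

/-- This equals `sign a * √(a ^ 2 - b ^ 2)` (`flowRotNum_eq_sign_mul_sqrt`); the form used here is
visibly homogeneous in `(a, b)` and continuous off `a = 0`. -/
noncomputable def flowRotNum (a b : ℝ) : ℝ := a * √(1 - (b / a) ^ 2)

noncomputable def flowCoord (a b x : ℝ) : ℝ :=
  x + π⁻¹ * arctan (b * cos (2 * π * x) / (a + flowRotNum a b + b * sin (2 * π * x)))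

noncomputable def arnoldError (a b : ℝ) : ℝ :=
  2 * π * |a| * |b| * (|a| + |b|) ^ 2 / (|a| - |b|) ^ 2

lemma abs_sub_abs_le_abs_add_mul_sin (a b θ : ℝ) : |a| - |b| ≤ |a + b * sin θ| := by
  have := abs_sin_le_one θ
  calc |a| - |b| ≤ |a| - |b * sin θ| := by
        rw [abs_mul]; nlinarith [abs_nonneg b]
    _ ≤ _ := abs_sub_abs_le_abs_add _ _

lemma abs_add_mul_sin_le (a b θ : ℝ) : |a + b * sin θ| ≤ |a| + |b| := by
  have := abs_sin_le_one θ
  calc |a + b * sin θ| ≤ |a| + |b| * |sin θ| := by rw [← abs_mul]; exact abs_add_le _ _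
    _ ≤ |a| + |b| := by nlinarith [abs_nonneg b]

lemma abs_mul_sin_sub_le (b t x : ℝ) :
    |b * sin (2 * π * t) - b * sin (2 * π * x)| ≤ 2 * π * |b| * |t - x| := by
  rw [← mul_sub, abs_mul]
  calc |b| * |sin (2 * π * t) - sin (2 * π * x)| ≤ |b| * |2 * π * t - 2 * π * x| :=
        mul_le_mul_of_nonneg_left (abs_sin_sub_sin_le _ _) (abs_nonneg b)
    _ = 2 * π * |b| * |t - x| := by
        rw [← mul_sub, abs_mul, abs_of_pos two_pi_pos]; ring

lemma flowRotNum_eq_sign_mul_sqrt (a b : ℝ) : flowRotNum a b = sign a * √(a ^ 2 - b ^ 2) := by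
  rcases eq_or_ne a 0 with rfl | ha
  · simp [flowRotNum]
  have habs : a = sign a * |a| := by
    rcases ha.lt_or_gt with h | h
    · rw [sign_of_neg h, abs_of_neg h]; ring
    · rw [sign_of_pos h, abs_of_pos h]; ring
  rw [flowRotNum, show 1 - (b / a) ^ 2 = (a ^ 2 - b ^ 2) / a ^ 2 by field_simp,
    sqrt_div' _ (sq_nonneg a), sqrt_sq_eq_abs]
  nth_rewrite 1 [habs]
  field_simp

lemma flowRotNum_mul_mul {μ : ℝ} (hμ : μ ≠ 0) (a b : ℝ) :
    flowRotNum (μ * a) (μ * b) = μ * flowRotNum a b := by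
  rw [flowRotNum, flowRotNum, mul_div_mul_left _ _ hμ, mul_assoc]

lemma arnoldError_mul_mul (μ a b : ℝ) : arnoldError (μ * a) (μ * b) = μ ^ 2 * arnoldError a b := by
  rcases eq_or_ne μ 0 with rfl | hμ
  · simp [arnoldError]
  have : 0 < |μ| := abs_pos.2 hμ
  simp only [arnoldError, abs_mul, ← mul_add, ← mul_sub, mul_pow, ← sq_abs μ]
  field_simp

lemma abs_flowCoord_sub_le (a b x : ℝ) : |flowCoord a b x - x| ≤ 1 / 2 := by
  set y := b * cos (2 * π * x) / (a + flowRotNum a b + b * sin (2 * π * x))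
  have h : |arctan y| ≤ π / 2 :=
    abs_le.2 ⟨(neg_pi_div_two_lt_arctan y).le, (arctan_lt_pi_div_two y).le⟩
  rw [flowCoord, add_sub_cancel_left, abs_mul, abs_of_pos (inv_pos.2 pi_pos)]
  calc π⁻¹ * |arctan y| ≤ π⁻¹ * (π / 2) := by gcongr
    _ = 1 / 2 := by field_simp

section FlowCoordinate

variable {a b : ℝ}

lemma one_sub_div_sq_nonneg (hab : |b| < |a|) : 0 ≤ 1 - (b / a) ^ 2 := by
  have ha : a ≠ 0 := abs_pos.1 ((abs_nonneg b).trans_lt hab)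
  rw [div_pow, sub_nonneg, div_le_one (by positivity)]
  exact (sq_lt_sq.2 hab).le

lemma flowRotNum_sq (hab : |b| < |a|) : flowRotNum a b ^ 2 = a ^ 2 - b ^ 2 := by
  have ha : a ≠ 0 := abs_pos.1 ((abs_nonneg b).trans_lt hab)
  rw [flowRotNum, mul_pow, sq_sqrt (one_sub_div_sq_nonneg hab)]
  field_simp

lemma abs_flowRotNum_le : |flowRotNum a b| ≤ |a| := by
  rw [flowRotNum, abs_mul, abs_of_nonneg (sqrt_nonneg _)]
  exact mul_le_of_le_one_right (abs_nonneg a) (sqrt_le_one.2 (by nlinarith [sq_nonneg (b / a)]))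

lemma abs_lt_abs_add_flowRotNum (hab : |b| < |a|) : |b| < |a + flowRotNum a b| := by
  have hs : 0 ≤ √(1 - (b / a) ^ 2) := sqrt_nonneg _
  rw [flowRotNum, ← mul_one_add, abs_mul, abs_of_nonneg (by positivity : 0 ≤ 1 + √_)]
  nlinarith [abs_nonneg a]

lemma flowCoord_hasDerivAt (hab : |b| < |a|) (x : ℝ) :
    HasDerivAt (flowCoord a b) (flowRotNum a b / (a + b * sin (2 * π * x))) x := by
  set c := flowRotNum a b
  have hg : a + b * sin (2 * π * x) ≠ 0 := by
    have := abs_sub_abs_le_abs_add_mul_sin a b (2 * π * x)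
    exact abs_pos.1 (by linarith)
  have hD : a + c + b * sin (2 * π * x) ≠ 0 := by
    have h := abs_sin_le_one (2 * π * x)
    have h1 := abs_lt_abs_add_flowRotNum hab
    have h2 : |b * sin (2 * π * x)| ≤ |b| := by rw [abs_mul]; nlinarith [abs_nonneg b]
    refine abs_pos.1 (lt_of_lt_of_le ?_ (abs_sub_abs_le_abs_add _ _))
    linarith
  have hθ : HasDerivAt (fun y => 2 * π * y) (2 * π) x := by
    simpa using (hasDerivAt_id x).const_mul (2 * π)
  have hk := ((hθ.cos.const_mul b).div ((hθ.sin.const_mul b).const_add (a + c)) hD).arctan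
  refine ((hasDerivAt_id' x).add (hk.const_mul π⁻¹)).congr_deriv ?_
  have hc : c ^ 2 = a ^ 2 - b ^ 2 := flowRotNum_sq hab
  have hsc := sin_sq_add_cos_sq (2 * π * x)
  have hac : a + c ≠ 0 := abs_pos.1 ((abs_nonneg b).trans_lt (abs_lt_abs_add_flowRotNum hab))
  simp only [Pi.div_apply]
  generalize sin (2 * π * x) = s at *
  generalize cos (2 * π * x) = co at *
  have hE : 1 + (b * co / (a + c + b * s)) ^ 2 =
      2 * (a + c) * (a + b * s) / (a + c + b * s) ^ 2 := by
    field_simp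
    linear_combination b ^ 2 * hsc + hc
  rw [hE]
  field_simp
  linear_combination -hc - b ^ 2 * hsc

lemma abs_flowCoord_arnoldLift_sub_le (hab : |b| < |a|) (x : ℝ) :
    |flowCoord a b (arnoldLift a b x) - flowCoord a b x - flowRotNum a b| ≤ arnoldError a b := by
  set c := flowRotNum a b
  set g := fun t => a + b * sin (2 * π * t)
  have hm : 0 < |a| - |b| := by linarith
  have hg_lower (t : ℝ) : |a| - |b| ≤ |g t| := abs_sub_abs_le_abs_add_mul_sin a b _
  have hgx : g x ≠ 0 := abs_pos.1 (hm.trans_le (hg_lower x))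
  have hFx : arnoldLift a b x - x = g x := by simp only [arnoldLift, g]; ring
  set s := Set.uIcc x (arnoldLift a b x)
  have hclose (t : ℝ) (ht : t ∈ s) : |t - x| ≤ |a| + |b| :=
    calc |t - x| ≤ |arnoldLift a b x - x| := Set.abs_sub_left_of_mem_uIcc ht
      _ ≤ |a| + |b| := hFx ▸ abs_add_mul_sin_le a b _
  have hderiv_le (t : ℝ) (ht : t ∈ s) :
      ‖c / g t - c / g x‖ ≤ 2 * π * |a| * |b| * (|a| + |b|) / (|a| - |b|) ^ 2 := by
    have hgt : g t ≠ 0 := abs_pos.1 (hm.trans_le (hg_lower t))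
    have hgap : |g x - g t| ≤ 2 * π * |b| * (|a| + |b|) :=
      calc |g x - g t| = |b * sin (2 * π * t) - b * sin (2 * π * x)| := by
            rw [abs_sub_comm]; simp only [g]; ring_nf
        _ ≤ 2 * π * |b| * |t - x| := abs_mul_sin_sub_le b t x
        _ ≤ 2 * π * |b| * (|a| + |b|) := by gcongr; exact hclose t ht
    rw [Real.norm_eq_abs, div_sub_div _ _ hgt hgx, show c * g x - g t * c = c * (g x - g t) by ring,
      abs_div, abs_mul, abs_mul]
    calc |c| * |g x - g t| / (|g t| * |g x|)
        ≤ |a| * (2 * π * |b| * (|a| + |b|)) / ((|a| - |b|) * (|a| - |b|)) := by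
          gcongr ?_ * ?_ / (?_ * ?_)
          · exact abs_flowRotNum_le
          · exact hg_lower t
          · exact hg_lower x
      _ = 2 * π * |a| * |b| * (|a| + |b|) / (|a| - |b|) ^ 2 := by ring
  have hφ (t : ℝ) (_ : t ∈ s) :
      HasDerivWithinAt (fun y => flowCoord a b y - y * (c / g x)) (c / g t - c / g x) s t :=
    ((flowCoord_hasDerivAt hab t).sub (hasDerivAt_mul_const (c / g x))).hasDerivWithinAt
  have hmvt := (convex_uIcc x (arnoldLift a b x)).norm_image_sub_le_of_norm_hasDerivWithin_le hφ
    hderiv_le Set.left_mem_uIcc Set.right_mem_uIcc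
  have hshift : flowCoord a b (arnoldLift a b x) - arnoldLift a b x * (c / g x) -
      (flowCoord a b x - x * (c / g x)) =
      flowCoord a b (arnoldLift a b x) - flowCoord a b x - c := by
    have : (arnoldLift a b x - x) * (c / g x) = c := by rw [hFx]; field_simp
    linear_combination -this
  rw [hshift, Real.norm_eq_abs, Real.norm_eq_abs, hFx] at hmvt
  calc _ ≤ 2 * π * |a| * |b| * (|a| + |b|) / (|a| - |b|) ^ 2 * |g x| := hmvt
    _ ≤ 2 * π * |a| * |b| * (|a| + |b|) / (|a| - |b|) ^ 2 * (|a| + |b|) := by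
        gcongr; exact abs_add_mul_sin_le a b _
    _ = arnoldError a b := by rw [arnoldError]; ring

end FlowCoordinate

lemma abs_iterate_sub_le {f H : ℝ → ℝ} {c d : ℝ} (h : ∀ x, |H (f x) - H x - c| ≤ d)
    (n : ℕ) (x : ℝ) : |H (f^[n] x) - H x - n * c| ≤ n * d := by
  induction n with
  | zero => simp
  | succ n ih =>
    rw [Function.iterate_succ_apply']
    calc |H (f (f^[n] x)) - H x - (n + 1 : ℕ) * c|
        = |(H (f (f^[n] x)) - H (f^[n] x) - c) + (H (f^[n] x) - H x - n * c)| := by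
          push_cast; ring_nf
      _ ≤ d + n * d := (abs_add_le _ _).trans (add_le_add (h _) ih)
      _ = (n + 1 : ℕ) * d := by push_cast; ring

lemma HasRotNum.abs_sub_le {f H : ℝ → ℝ} {r c d C : ℝ} (hr : HasRotNum f r)
    (hH : ∀ x, |H x - x| ≤ C) (h : ∀ x, |H (f x) - H x - c| ≤ d) : |r - c| ≤ d := by
  have hlim : Tendsto (fun n : ℕ => d + 2 * C / n) atTop (𝓝 (d + 0)) :=
    tendsto_const_nhds.add (tendsto_const_div_atTop_nhds_zero_nat _)
  refine le_of_tendsto_of_tendsto ((continuous_abs.tendsto _).comp (hr.sub_const c))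
    (by simpa using hlim) ?_
  filter_upwards [eventually_gt_atTop 0] with n hn
  have hn' : (0 : ℝ) < n := Nat.cast_pos.2 hn
  have hiter : |f^[n] 0 - n * c| ≤ n * d + 2 * C :=
    calc |f^[n] 0 - n * c|
        = |(H (f^[n] 0) - H 0 - n * c) + (f^[n] 0 - H (f^[n] 0)) + (H 0 - 0)| := by ring_nf
      _ ≤ n * d + C + C := by
          refine (abs_add_three _ _ _).trans (add_le_add_three (abs_iterate_sub_le h n 0) ?_ (hH 0))
          rw [abs_sub_comm]
          exact hH _
      _ = n * d + 2 * C := by ring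
  simp only [Function.comp_apply]
  rw [show f^[n] 0 / n - c = (f^[n] 0 - n * c) / n by field_simp, abs_div, abs_of_pos hn',
    div_le_iff₀ hn']
  calc |f^[n] 0 - n * c| ≤ n * d + 2 * C := hiter
    _ = (d + 2 * C / n) * n := by field_simp

lemma hasRotNum_id_iff {r : ℝ} : HasRotNum id r ↔ r = 0 := by
  simp [HasRotNum, tendsto_const_nhds_iff, eq_comm]

lemma HasRotNum.abs_sub_flowRotNum_le {a b r : ℝ} (hr : HasRotNum (arnoldLift a b) r)
    (hab : |b| < |a|) : |r - flowRotNum a b| ≤ arnoldError a b :=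
  hr.abs_sub_le (abs_flowCoord_sub_le a b) (abs_flowCoord_arnoldLift_sub_le hab)

section Derivative

variable {α β : ℝ → ℝ} {a' b' : ℝ}

lemma tendsto_div_self_of_hasDerivAt (hα : HasDerivAt α a' 0) (hα0 : α 0 = 0) :
    Tendsto (fun μ => α μ / μ) (𝓝[≠] 0) (𝓝 a') :=
  (hasDerivAt_iff_tendsto_slope.1 hα).congr fun μ => by simp [slope_def_field, hα0]

lemma eventually_abs_lt_abs_of_hasDerivAt (hα : HasDerivAt α a' 0) (hβ : HasDerivAt β b' 0)
    (hα0 : α 0 = 0) (hβ0 : β 0 = 0) (hab : |b'| < |a'|) :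
    ∀ᶠ μ in 𝓝[≠] 0, |β μ| < |α μ| := by
  have hlt := ((tendsto_div_self_of_hasDerivAt hβ hβ0).abs.prodMk_nhds
    (tendsto_div_self_of_hasDerivAt hα hα0).abs).eventually (isOpen_lt_prod.mem_nhds hab)
  filter_upwards [hlt, self_mem_nhdsWithin] with μ h hμ
  simpa [abs_div, div_lt_div_iff_of_pos_right (abs_pos.2 hμ)] using h

lemma hasDerivAt_of_abs_sub_flowRotNum_le {ρ : ℝ → ℝ} (hα : HasDerivAt α a' 0)
    (hβ : HasDerivAt β b' 0) (hα0 : α 0 = 0) (hβ0 : β 0 = 0) (hab : |b'| < |a'|) (hρ0 : ρ 0 = 0)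
    (hρ : ∀ᶠ μ in 𝓝[≠] 0, |ρ μ - flowRotNum (α μ) (β μ)| ≤ arnoldError (α μ) (β μ)) :
    HasDerivAt ρ (flowRotNum a' b') 0 := by
  set u := fun μ => α μ / μ
  set v := fun μ => β μ / μ
  have hu : Tendsto u (𝓝[≠] 0) (𝓝 a') := tendsto_div_self_of_hasDerivAt hα hα0
  have hv : Tendsto v (𝓝[≠] 0) (𝓝 b') := tendsto_div_self_of_hasDerivAt hβ hβ0
  have ha' : a' ≠ 0 := abs_pos.1 ((abs_nonneg b').trans_lt hab)
  have hmain : Tendsto (fun μ => flowRotNum (u μ) (v μ)) (𝓝[≠] 0) (𝓝 (flowRotNum a' b')) :=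
    hu.mul ((tendsto_const_nhds.sub ((hv.div hu ha').pow 2)).sqrt)
  have herr : Tendsto (fun μ => |μ| * arnoldError (u μ) (v μ)) (𝓝[≠] 0) (𝓝 0) := by
    have hE : Tendsto (fun μ => arnoldError (u μ) (v μ)) (𝓝[≠] 0) (𝓝 (arnoldError a' b')) := by
      refine ((((tendsto_const_nhds.mul hu.abs).mul hv.abs).mul
        ((hu.abs.add hv.abs).pow 2)).div ((hu.abs.sub hv.abs).pow 2) ?_)
      exact pow_ne_zero 2 (sub_ne_zero.2 hab.ne')
    simpa using ((continuous_abs.tendsto' 0 0 abs_zero).mono_left nhdsWithin_le_nhds).mul hE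
  have hslope : ∀ᶠ μ in 𝓝[≠] 0,
      ‖slope ρ 0 μ - flowRotNum (u μ) (v μ)‖ ≤ |μ| * arnoldError (u μ) (v μ) := by
    filter_upwards [hρ, self_mem_nhdsWithin] with μ h hμ
    have hμ' : μ ≠ 0 := hμ
    rw [show α μ = μ * u μ by simp only [u]; field_simp,
      show β μ = μ * v μ by simp only [v]; field_simp, flowRotNum_mul_mul hμ',
      arnoldError_mul_mul] at h
    rw [slope_def_field, hρ0, sub_zero, sub_zero, Real.norm_eq_abs,
      show ρ μ / μ - flowRotNum (u μ) (v μ) = (ρ μ - μ * flowRotNum (u μ) (v μ)) / μ by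
        field_simp, abs_div, div_le_iff₀ (abs_pos.2 hμ')]
    calc _ ≤ μ ^ 2 * arnoldError (u μ) (v μ) := h
      _ = |μ| * arnoldError (u μ) (v μ) * |μ| := by rw [← sq_abs]; ring
  rw [hasDerivAt_iff_tendsto_slope]
  simpa using hmain.add (squeeze_zero_norm' hslope herr)

end Derivative

theorem arnold_map_rotation_number_differentiable_at_origin_general
    (α β : ℝ → ℝ) (hα : ContDiff ℝ 1 α) (hβ : ContDiff ℝ 1 β)
    (hα0 : α 0 = 0) (hβ0 : β 0 = 0)
    (hslope : |deriv β 0| < |deriv α 0|)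
    (ε : ℝ) (hε : 0 < ε)
    (ρ : ℝ → ℝ)
    (hρ : ∀ μ : ℝ, |μ| < ε →
      HasRotNum (fun x => x + α μ + β μ * Real.sin (2 * π * x)) (ρ μ)) :
    HasDerivAt ρ (Real.sign (deriv α 0) *
      Real.sqrt ((deriv α 0) ^ 2 - (deriv β 0) ^ 2)) 0 := by
  have hA : HasDerivAt α (deriv α 0) 0 := (hα.differentiable one_ne_zero 0).hasDerivAt
  have hB : HasDerivAt β (deriv β 0) 0 := (hβ.differentiable one_ne_zero 0).hasDerivAt
  have hρ0 : ρ 0 = 0 := by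
    have h0 : HasRotNum (arnoldLift (α 0) (β 0)) (ρ 0) := hρ 0 (by simpa using hε)
    rw [hα0, hβ0, show arnoldLift 0 0 = id by ext; simp [arnoldLift]] at h0
    exact hasRotNum_id_iff.1 h0
  have hest : ∀ᶠ μ in 𝓝[≠] 0,
      |ρ μ - flowRotNum (α μ) (β μ)| ≤ arnoldError (α μ) (β μ) := by
    filter_upwards [eventually_abs_lt_abs_of_hasDerivAt hA hB hα0 hβ0 hslope,
      nhdsWithin_le_nhds (Metric.ball_mem_nhds 0 hε)] with μ hμ hμε
    exact HasRotNum.abs_sub_flowRotNum_le (hρ μ (by simpa using hμε)) hμ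
  rw [← flowRotNum_eq_sign_mul_sqrt]
  exact hasDerivAt_of_abs_sub_flowRotNum_le hA hB hα0 hβ0 hslope hρ0 hest

theorem arnold_map_rotation_number_differentiable_at_origin
    (α β : ℝ → ℝ) (hα : ContDiff ℝ 1 α) (hβ : ContDiff ℝ 1 β)
    (hα0 : α 0 = 0) (hβ0 : β 0 = 0)
    (hslope : |deriv β 0| < |deriv α 0|)
    (ε : ℝ) (hε : 0 < ε)
    (hβsmall : ∀ μ : ℝ, |μ| < ε → |β μ| < 1 / (2 * π))
    (ρ : ℝ → ℝ)
    (hρ : ∀ μ : ℝ, |μ| < ε →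
      HasRotNum (fun x => x + α μ + β μ * Real.sin (2 * π * x)) (ρ μ)) :
    HasDerivAt ρ (Real.sign (deriv α 0) *
      Real.sqrt ((deriv α 0) ^ 2 - (deriv β 0) ^ 2)) 0 :=
  arnold_map_rotation_number_differentiable_at_origin_general α β hα hβ hα0 hβ0 hslope ε hε ρ hρ
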